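/- For all natural numbers k ≥ 0 and odd natural numbers i, b_{i,2k,-k} = 0. -/
import Mathlib


open Finset

noncomputable def msn (i j : ℕ) (k : ℝ) : ℝ :=
  ∑ r ∈ Finset.range (j + 1), (j.choose r : ℝ) * (-1 : ℝ) ^ (j - r) * ((r : ℝ) + k) ^ i

theorem stmt (i k : ℕ) (hi : Odd i) : msn i (2 * k) (-(k : ℝ)) = 0 := by
  have key : msn i (2 * k) (-(k : ℝ)) = - msn i (2 * k) (-(k : ℝ)) := by
    unfold msn
    conv_lhs => rw [← Finset.sum_range_reflect]
    rw [← Finset.sum_neg_distrib]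
    apply Finset.sum_congr rfl
    intro r hr
    rw [Finset.mem_range] at hr
    have hr' : r ≤ 2 * k := Nat.lt_succ_iff.mp hr
    have h1 : 2 * k + 1 - 1 - r = 2 * k - r := by omega
    rw [h1, Nat.choose_symm hr']
    have h2 : 2 * k - (2 * k - r) = r := by omega
    rw [h2]
    have h3 : ((2 * k - r : ℕ) : ℝ) = 2 * k - r := by
      push_cast [hr']; ring
    rw [h3]
    have h4 : (2 * (k:ℝ) - r + -k) = -((r:ℝ) + -k) := by ring
    rw [h4, hi.neg_pow]
    have h5 : (-1 : ℝ) ^ r = (-1 : ℝ) ^ (2 * k - r) := by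
      rcases Nat.even_or_odd r with he | ho
      · have : Even (2 * k - r) := by
          rw [Nat.even_iff] at *; omega
        rw [he.neg_one_pow, this.neg_one_pow]
      · have : Odd (2 * k - r) := by
          rw [Nat.odd_iff] at *; omega
        rw [ho.neg_one_pow, this.neg_one_pow]
    rw [← h5]
    ring
  linarith
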